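/- arXiv:2008.12045 — 4 statements merged into one kernel-verified Lean document; each statement's English description precedes it below -/
import Mathlib

section
/- Let a > 0, b > 0, c ∈ (−1,0) and t₀ ∈ ℝ. Then there exist T > t₀ and a C² function h : [t₀,T] → ℝ with h > 0 on [t₀,T], satisfying h''(t) = (1 − h'(t)²)/(a·h(t)) for all t ∈ [t₀,T], with h(t₀) = b and h'(t₀) = c, and such that h'(T) = 0 (in particular h(T) > 0). -/
/-!
Along a solution, `(1 - h'²)^(a/2) · h` is constant, so writing `h' = tanh σ` the solution is
`h = D · cosh^a σ` with the rapidity `σ` solving `σ' = 1 / (a D cosh^a σ)`. The latter is solved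
globally by inverting `t = t₀ + ∫ a D cosh^a`, whose derivative is at least `a D > 0`; then
`h'` vanishes exactly when `σ` crosses `0`, which happens after `t₀` because `σ(t₀) = artanh c < 0`.
-/

open Real Filter Function

theorem Real.hasDerivAt_tanh (x : ℝ) : HasDerivAt tanh (1 - tanh x ^ 2) x := by
  have h := (hasDerivAt_sinh x).div (hasDerivAt_cosh x) (cosh_pos x).ne'
  rw [show tanh = sinh / cosh from funext tanh_eq_sinh_div_cosh]
  refine h.congr_deriv ?_
  rw [Pi.div_apply]
  field_simp

theorem Real.continuous_tanh : Continuous tanh :=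
  continuous_iff_continuousAt.2 fun x => (hasDerivAt_tanh x).continuousAt

theorem tendsto_atTop_atTop_and_atBot_atBot_of_pos_le_hasDerivAt {Φ φ : ℝ → ℝ} {K : ℝ}
    (hK : 0 < K) (hΦ : ∀ x, HasDerivAt Φ (φ x) x) (hφ : ∀ x, K ≤ φ x) :
    Tendsto Φ atTop atTop ∧ Tendsto Φ atBot atBot := by
  have hmono : Monotone fun x => Φ x - K * x :=
    monotone_of_hasDerivAt_nonneg (fun x => (hΦ x).sub ((hasDerivAt_id x).const_mul K))
      fun x => by simpa using hφ x
  have hlin : Tendsto (fun x => Φ 0 + K * x) atTop atTop ∧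
      Tendsto (fun x => Φ 0 + K * x) atBot atBot :=
    ⟨tendsto_atTop_add_const_left _ _ (tendsto_id.const_mul_atTop hK),
      tendsto_atBot_add_const_left _ _ (tendsto_id.const_mul_atBot hK)⟩
  constructor
  · refine tendsto_atTop_mono' _ ?_ hlin.1
    filter_upwards [eventually_ge_atTop 0] with x hx
    linarith [hmono hx]
  · refine tendsto_atBot_mono' _ ?_ hlin.2
    filter_upwards [eventually_le_atBot 0] with x hx
    linarith [hmono hx]

theorem exists_hasDerivAt_leftInverse_of_pos_le_hasDerivAt {Φ φ : ℝ → ℝ} {K : ℝ} (hK : 0 < K)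
    (hΦ : ∀ x, HasDerivAt Φ (φ x) x) (hφ : ∀ x, K ≤ φ x) :
    ∃ σ : ℝ → ℝ, LeftInverse σ Φ ∧ ∀ t, HasDerivAt σ (φ (σ t))⁻¹ t := by
  obtain ⟨htop, hbot⟩ := tendsto_atTop_atTop_and_atBot_atBot_of_pos_le_hasDerivAt hK hΦ hφ
  have hsurj : Surjective Φ :=
    (continuous_iff_continuousAt.2 fun x => (hΦ x).continuousAt).surjective htop hbot
  have hmono : StrictMono Φ := strictMono_of_hasDerivAt_pos hΦ fun x => hK.trans_le (hφ x)
  let e := hmono.orderIsoOfSurjective Φ hsurj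
  refine ⟨e.symm, hmono.orderIsoOfSurjective_symm_apply_self Φ hsurj, fun t => ?_⟩
  exact (hΦ _).of_local_left_inverse e.symm.continuous.continuousAt (hK.trans_le (hφ _)).ne'
    (Eventually.of_forall e.apply_symm_apply)

theorem contDiff_two_of_hasDerivAt {f f' f'' : ℝ → ℝ} (hf : ∀ x, HasDerivAt f (f' x) x)
    (hf' : ∀ x, HasDerivAt f' (f'' x) x) (hf'' : Continuous f'') : ContDiff ℝ 2 f := by
  have hderiv : deriv f = f' := funext fun x => (hf x).deriv
  rw [show (2 : WithTop ℕ∞) = 1 + 1 by norm_num, contDiff_succ_iff_deriv, hderiv,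
    contDiff_one_iff_deriv, funext fun x => (hf' x).deriv]
  exact ⟨fun x => (hf x).differentiableAt, by simp, fun x => (hf' x).differentiableAt, hf''⟩

section Rapidity

variable {a D : ℝ} {σ : ℝ → ℝ}

theorem hasDerivAt_mul_cosh_rpow_comp (ha : a ≠ 0) (hD : D ≠ 0)
    (hσ : ∀ t, HasDerivAt σ (a * D * cosh (σ t) ^ a)⁻¹ t) (t : ℝ) :
    HasDerivAt (fun t => D * cosh (σ t) ^ a) (tanh (σ t)) t := by
  have hcosh := (cosh_pos (σ t)).ne'
  have h := (((hasDerivAt_cosh (σ t)).comp t (hσ t)).rpow_const (p := a)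
    (Or.inl hcosh)).const_mul D
  refine h.congr_deriv ?_
  rw [tanh_eq_sinh_div_cosh, comp_apply, rpow_sub_one hcosh]
  field_simp

theorem hasDerivAt_tanh_comp (hσ : ∀ t, HasDerivAt σ (a * D * cosh (σ t) ^ a)⁻¹ t) (t : ℝ) :
    HasDerivAt (fun t => tanh (σ t))
      ((1 - tanh (σ t) ^ 2) / (a * (D * cosh (σ t) ^ a))) t := by
  refine ((hasDerivAt_tanh (σ t)).comp t (hσ t)).congr_deriv ?_
  rw [div_eq_mul_inv, mul_assoc]

end Rapidity

/-- Existence of a solution of `h'' = (1 - h'²)/(a·h)` starting at `h(t₀) = b > 0`,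
`h'(t₀) = c ∈ (-1,0)`, which stays positive up to a time `T > t₀` with `h'(T) = 0`
(and in particular `h(T) > 0`). -/
theorem ode_solution_until_critical (a b c t₀ : ℝ) (ha : 0 < a) (hb : 0 < b)
    (hc : c ∈ Set.Ioo (-1 : ℝ) 0) :
    ∃ T, t₀ < T ∧
      ∃ h : ℝ → ℝ, ContDiff ℝ 2 h ∧
        (∀ t ∈ Set.Icc t₀ T, 0 < h t) ∧
        (∀ t ∈ Set.Icc t₀ T, deriv (deriv h) t = (1 - (deriv h t) ^ 2) / (a * h t)) ∧
        h t₀ = b ∧ deriv h t₀ = c ∧ deriv h T = 0 ∧ 0 < h T := by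
  have hc' : c ∈ Set.Ioo (-1 : ℝ) 1 := ⟨hc.1, hc.2.trans one_pos⟩
  set s₀ := artanh c
  set D := b / cosh s₀ ^ a
  have hD : 0 < D := div_pos hb (rpow_pos_of_pos (cosh_pos s₀) a)
  set Φ : ℝ → ℝ := fun s => t₀ + ∫ x in s₀..s, a * D * cosh x ^ a
  have hΦ : ∀ s, HasDerivAt Φ (a * D * cosh s ^ a) s := fun s =>
    ((Continuous.integral_hasStrictDerivAt (by fun_prop (disch := positivity)) s₀ s)
      |>.hasDerivAt).const_add t₀
  obtain ⟨σ, hσΦ, hσ⟩ := exists_hasDerivAt_leftInverse_of_pos_le_hasDerivAt (mul_pos ha hD) hΦ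
    fun s => le_mul_of_one_le_right (mul_pos ha hD).le (one_le_rpow (one_le_cosh s) ha.le)
  have hh := hasDerivAt_mul_cosh_rpow_comp ha.ne' hD.ne' hσ
  have hh' := hasDerivAt_tanh_comp hσ
  have hderiv : deriv (fun t => D * cosh (σ t) ^ a) = fun t => tanh (σ t) :=
    funext fun t => (hh t).deriv
  have hΦs₀ : Φ s₀ = t₀ := by simp [Φ]
  have hσt₀ : σ t₀ = s₀ := hΦs₀ ▸ hσΦ s₀
  have hT : t₀ < Φ 0 :=
    hΦs₀ ▸ strictMono_of_hasDerivAt_pos hΦ (fun s => by positivity) (artanh_neg hc)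
  refine ⟨Φ 0, hT, fun t => D * cosh (σ t) ^ a, contDiff_two_of_hasDerivAt hh hh' ?_,
    fun t _ => by positivity, fun t _ => by rw [hderiv, (hh' t).deriv], ?_, ?_, ?_, by positivity⟩
  · have hσc : Continuous σ := continuous_iff_continuousAt.2 fun t => (hσ t).continuousAt
    exact (continuous_const.sub ((continuous_tanh.comp hσc).pow 2)).div
      (by fun_prop (disch := positivity)) fun t => by positivity
  · simp only [hσt₀, D]; exact div_mul_cancel₀ _ (rpow_pos_of_pos (cosh_pos s₀) a).ne'
  · rw [hderiv]; exact (congrArg tanh hσt₀).trans (tanh_artanh hc')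
  · rw [hderiv]; exact (congrArg tanh (hσΦ 0)).trans tanh_zero
end

section
/- Let a > 0 and let h be a C² real-valued function on a real interval I with h > 0 and |h'| < 1 on I, satisfying h''(t) = (1 − h'(t)²)/(a·h(t)) for all t ∈ I. Then the function t ↦ h(t)^{−1/a}/√(1 − h'(t)²) is constant on I. -/
/-!
Along a solution, `C = h^{-1/a} (1 - h'²)^{-1/2}` has logarithmic derivative
`-h'/(a h) + h' h''/(1 - h'²)`, and the ODE says exactly that `h''/(1 - h'²) = 1/(a h)`,
so this vanishes. A function with zero derivative on an interval is constant.
-/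

open Real

theorem Set.OrdConnected.eq_of_hasDerivAt_eq_zero {E : Type*} [NormedAddCommGroup E]
    [NormedSpace ℝ E] {s : Set ℝ} {f : ℝ → E} (hs : s.OrdConnected)
    (hf : ∀ x ∈ s, HasDerivAt f 0 x) {x y : ℝ} (hx : x ∈ s) (hy : y ∈ s) : f x = f y := by
  have hxy := hs.convex.norm_image_sub_le_of_norm_hasDerivWithin_le
    (fun z hz => (hf z hz).hasDerivWithinAt) (fun _ _ => norm_zero.le) hy hx
  rwa [zero_mul, norm_le_zero_iff, sub_eq_zero] at hxy

theorem HasDerivAt.rpow_div_sqrt_one_sub_sq {u v : ℝ → ℝ} {u' v' t : ℝ} (p : ℝ)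
    (hu : HasDerivAt u u' t) (hv : HasDerivAt v v' t) (hut : 0 < u t) (hvt : |v t| < 1) :
    HasDerivAt (fun s => u s ^ p / √(1 - v s ^ 2))
      (u t ^ p / √(1 - v t ^ 2) * (p * u' / u t + v t * v' / (1 - v t ^ 2))) t := by
  have hw : 0 < 1 - v t ^ 2 := sub_pos.2 ((sq_lt_one_iff_abs_lt_one _).2 hvt)
  have hsqrt : √(1 - v t ^ 2) ^ 2 = 1 - v t ^ 2 := sq_sqrt hw.le
  have hsqrt_pos : 0 < √(1 - v t ^ 2) := sqrt_pos.2 hw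
  have hnum := hu.rpow_const (p := p) (Or.inl hut.ne')
  have hden : HasDerivAt (fun s => √(1 - v s ^ 2))
      (-(2 * v t * v') / (2 * √(1 - v t ^ 2))) t := by
    simpa using ((hv.pow 2).const_sub 1).sqrt hw.ne'
  refine (hnum.div hden hsqrt_pos.ne').congr_deriv ?_
  rw [rpow_sub_one hut.ne']
  field_simp
  rw [hsqrt]
  ring

theorem conserved_quantity_general (a : ℝ) (I : Set ℝ) (hI : I.OrdConnected)
    (h h' h'' : ℝ → ℝ)
    (hd1 : ∀ t ∈ I, HasDerivAt h (h' t) t)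
    (hd2 : ∀ t ∈ I, HasDerivAt h' (h'' t) t)
    (hpos : ∀ t ∈ I, 0 < h t)
    (hder : ∀ t ∈ I, |h' t| < 1)
    (hode : ∀ t ∈ I, h'' t = (1 - h' t ^ 2) / (a * h t)) :
    ∀ s ∈ I, ∀ t ∈ I,
      h s ^ (-(1 / a) : ℝ) / Real.sqrt (1 - h' s ^ 2) =
        h t ^ (-(1 / a) : ℝ) / Real.sqrt (1 - h' t ^ 2) := by
  refine fun s hs t ht => hI.eq_of_hasDerivAt_eq_zero
    (f := fun t => h t ^ (-(1 / a)) / √(1 - h' t ^ 2)) (fun x hx => ?_) hs ht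
  have hw : 1 - h' x ^ 2 ≠ 0 := (sub_pos.2 ((sq_lt_one_iff_abs_lt_one _).2 (hder x hx))).ne'
  refine ((hd1 x hx).rpow_div_sqrt_one_sub_sq _ (hd2 x hx) (hpos x hx) (hder x hx)).congr_deriv
    ?_
  rw [hode x hx]
  field_simp
  ring

/-- The quantity `h^{-1/a} / √(1 - h'²)` is a first integral of the ODE
`h'' = (1 - h'²)/(a·h)` on any real interval. -/
theorem conserved_quantity (a : ℝ) (ha : 0 < a) (I : Set ℝ) (hI : I.OrdConnected)
    (h h' h'' : ℝ → ℝ)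
    (hd1 : ∀ t ∈ I, HasDerivAt h (h' t) t)
    (hd2 : ∀ t ∈ I, HasDerivAt h' (h'' t) t)
    (hpos : ∀ t ∈ I, 0 < h t)
    (hder : ∀ t ∈ I, |h' t| < 1)
    (hode : ∀ t ∈ I, h'' t = (1 - h' t ^ 2) / (a * h t)) :
    ∀ s ∈ I, ∀ t ∈ I,
      h s ^ (-(1 / a) : ℝ) / Real.sqrt (1 - h' s ^ 2) =
        h t ^ (-(1 / a) : ℝ) / Real.sqrt (1 - h' t ^ 2) :=
  conserved_quantity_general a I hI h h' h'' hd1 hd2 hpos hder hode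
end

section
/- Let a > 0 and let h : [t₀,t₁] → ℝ be a C² function with h > 0 on [t₀,t₁], satisfying h''(t) = (1 − h'(t)²)/(a·h(t)) for all t ∈ [t₀,t₁], and suppose |h'(t₀)| < 1. Then |h'(t)| < 1 for all t ∈ [t₀,t₁], and h(t) ≥ h(t₀)·(1 − h'(t₀)²)^{a/2} for all t ∈ [t₀,t₁]. -/
/-!
Instead of the conserved quantity `h^{-1/a}/√(1 - h'²)` we use its inverse square
`E = h^{2/a} (1 - h'²)`, which avoids square roots. Along a solution
`E' = (2/a) h^{2/a - 1} h' (1 - h'² - a h h'') = 0`, so `E` keeps its positive initial value.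
Then `1 - h'² > 0` everywhere, and `h^{2/a} ≥ E(t₀) = h(t₀)^{2/a} (1 - h'(t₀)²)` gives the lower
bound after raising to the power `a/2`.
-/

open Set

noncomputable def odeEnergy (a : ℝ) (h h' : ℝ → ℝ) (t : ℝ) : ℝ :=
  h t ^ (2 / a) * (1 - h' t ^ 2)

theorem hasDerivAt_odeEnergy {a t : ℝ} {h h' : ℝ → ℝ} {h'' : ℝ} (ha : a ≠ 0)
    (hd1 : HasDerivAt h (h' t) t) (hd2 : HasDerivAt h' h'' t) (hpos : 0 < h t)
    (hode : h'' = (1 - h' t ^ 2) / (a * h t)) :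
    HasDerivAt (odeEnergy a h h') 0 t := by
  have hpow : HasDerivAt (fun s => h s ^ (2 / a)) (h' t * (2 / a) * h t ^ (2 / a - 1)) t :=
    hd1.rpow_const (Or.inl hpos.ne')
  have hsub : HasDerivAt (fun s => 1 - h' s ^ 2) (-(2 * h' t * h'')) t := by
    simpa using (hd2.pow 2).const_sub 1
  refine (hpow.mul hsub).congr_deriv ?_
  have hsplit : h t ^ (2 / a) = h t ^ (2 / a - 1) * h t := by
    rw [← Real.rpow_add_one hpos.ne']
    norm_num
  rw [hsplit, hode]
  field_simp
  ring

theorem mul_rpow_inv_le_of_rpow_mul_le {p x y c : ℝ} (hp : 0 < p) (hx : 0 ≤ x) (hy : 0 ≤ y)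
    (hc : 0 ≤ c) (hle : x ^ p * c ≤ y ^ p) : x * c ^ p⁻¹ ≤ y := by
  have hxp : 0 ≤ x ^ p := Real.rpow_nonneg hx p
  calc x * c ^ p⁻¹ = (x ^ p * c) ^ p⁻¹ := by
        rw [Real.mul_rpow hxp hc, ← Real.rpow_mul hx, mul_inv_cancel₀ hp.ne', Real.rpow_one]
    _ ≤ (y ^ p) ^ p⁻¹ := Real.rpow_le_rpow (mul_nonneg hxp hc) hle (inv_nonneg.mpr hp.le)
    _ = y := by rw [← Real.rpow_mul hy, mul_inv_cancel₀ hp.ne', Real.rpow_one]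

theorem ode_apriori_bounds_general (a t₀ t₁ : ℝ) (ha : 0 < a)
    (h h' h'' : ℝ → ℝ)
    (hd1 : ∀ t ∈ Set.Icc t₀ t₁, HasDerivAt h (h' t) t)
    (hd2 : ∀ t ∈ Set.Icc t₀ t₁, HasDerivAt h' (h'' t) t)
    (hpos : ∀ t ∈ Set.Icc t₀ t₁, 0 < h t)
    (hode : ∀ t ∈ Set.Icc t₀ t₁, h'' t = (1 - h' t ^ 2) / (a * h t))
    (hinit : |h' t₀| < 1) :
    ∀ t ∈ Set.Icc t₀ t₁,
      |h' t| < 1 ∧ h t₀ * (1 - h' t₀ ^ 2) ^ (a / 2 : ℝ) ≤ h t := by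
  intro t ht
  have ht₀ : t₀ ∈ Icc t₀ t₁ := ⟨le_rfl, ht.1.trans ht.2⟩
  have hderiv s (hs : s ∈ Icc t₀ t₁) : HasDerivAt (odeEnergy a h h') 0 s :=
    hasDerivAt_odeEnergy ha.ne' (hd1 s hs) (hd2 s hs) (hpos s hs) (hode s hs)
  have hconst : odeEnergy a h h' t = odeEnergy a h h' t₀ :=
    constant_of_has_deriv_right_zero (fun s hs => (hderiv s hs).continuousAt.continuousWithinAt)
      (fun s hs => (hderiv s (Ico_subset_Icc_self hs)).hasDerivWithinAt) t ht
  have hinit' : 0 < 1 - h' t₀ ^ 2 := sub_pos.mpr (sq_lt_one_iff_abs_lt_one _ |>.mpr hinit)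
  have hE₀ : 0 < odeEnergy a h h' t₀ := mul_pos (Real.rpow_pos_of_pos (hpos t₀ ht₀) _) hinit'
  have hpow_t : 0 ≤ h t ^ (2 / a) := Real.rpow_nonneg (hpos t ht).le _
  have hE : 0 < odeEnergy a h h' t := hconst ▸ hE₀
  have hgap : 0 < 1 - h' t ^ 2 := pos_of_mul_pos_right hE hpow_t
  refine ⟨(sq_lt_one_iff_abs_lt_one _).mp (sub_pos.mp hgap), ?_⟩
  rw [← inv_div]
  refine mul_rpow_inv_le_of_rpow_mul_le (by positivity) (hpos t₀ ht₀).le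
    (hpos t ht).le hinit'.le ?_
  calc h t₀ ^ (2 / a) * (1 - h' t₀ ^ 2) = h t ^ (2 / a) * (1 - h' t ^ 2) := hconst.symm
    _ ≤ h t ^ (2 / a) := mul_le_of_le_one_right hpow_t (by nlinarith)

/-- A priori bounds for solutions of `h'' = (1 - h'²)/(a·h)`: if `|h'(t₀)| < 1`
then `|h'| < 1` throughout, and `h ≥ h(t₀)·(1 - h'(t₀)²)^{a/2}`. -/
theorem ode_apriori_bounds (a t₀ t₁ : ℝ) (ha : 0 < a) (ht : t₀ ≤ t₁)
    (h h' h'' : ℝ → ℝ)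
    (hd1 : ∀ t ∈ Set.Icc t₀ t₁, HasDerivAt h (h' t) t)
    (hd2 : ∀ t ∈ Set.Icc t₀ t₁, HasDerivAt h' (h'' t) t)
    (hpos : ∀ t ∈ Set.Icc t₀ t₁, 0 < h t)
    (hode : ∀ t ∈ Set.Icc t₀ t₁, h'' t = (1 - h' t ^ 2) / (a * h t))
    (hinit : |h' t₀| < 1) :
    ∀ t ∈ Set.Icc t₀ t₁,
      |h' t| < 1 ∧ h t₀ * (1 - h' t₀ ^ 2) ^ (a / 2 : ℝ) ≤ h t :=
  ode_apriori_bounds_general a t₀ t₁ ha h h' h'' hd1 hd2 hpos hode hinit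
end

section
/- Let a > 0 and let h : [t₀,t₁] → ℝ be a C² function with h > 0 on [t₀,t₁], satisfying h''(t) = (1 − h'(t)²)/(a·h(t)) for all t ∈ [t₀,t₁], with |h'(t₀)| < 1 and h'(t) < 0 for all t ∈ [t₀,t₁]. Then h''(t) ≥ (1 − h'(t₀)²)/(a·h(t₀)) for all t ∈ [t₀,t₁], and consequently h'(t) ≥ h'(t₀) + (1 − h'(t₀)²)/(a·h(t₀))·(t − t₀) for all t ∈ [t₀,t₁]. -/
/-- While `h' < 0`, a solution of `h'' = (1 - h'²)/(a·h)` with `|h'(t₀)| < 1` has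
`h''` bounded below by its initial value, so `h'` increases at least linearly. -/
theorem ode_second_deriv_lower_bound (a t₀ t₁ : ℝ) (ha : 0 < a) (ht : t₀ ≤ t₁)
    (h h' h'' : ℝ → ℝ)
    (hd1 : ∀ t ∈ Set.Icc t₀ t₁, HasDerivAt h (h' t) t)
    (hd2 : ∀ t ∈ Set.Icc t₀ t₁, HasDerivAt h' (h'' t) t)
    (hpos : ∀ t ∈ Set.Icc t₀ t₁, 0 < h t)
    (hode : ∀ t ∈ Set.Icc t₀ t₁, h'' t = (1 - h' t ^ 2) / (a * h t))
    (hinit : |h' t₀| < 1)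
    (hneg : ∀ t ∈ Set.Icc t₀ t₁, h' t < 0) :
    ∀ t ∈ Set.Icc t₀ t₁,
      (1 - h' t₀ ^ 2) / (a * h t₀) ≤ h'' t ∧
      h' t₀ + (1 - h' t₀ ^ 2) / (a * h t₀) * (t - t₀) ≤ h' t := by
  have ht₀ : t₀ ∈ Set.Icc t₀ t₁ := ⟨le_refl _, ht⟩
  have hcont : ContinuousOn h' (Set.Icc t₀ t₁) :=
    fun t htm => (hd2 t htm).continuousAt.continuousWithinAt
  obtain ⟨hinit1, _⟩ := abs_lt.mp hinit
  -- key : h' stays above -1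
  have key : ∀ t ∈ Set.Icc t₀ t₁, -1 < h' t := by
    by_contra hc
    push_neg at hc
    obtain ⟨s, hsmem, hsle⟩ := hc
    set S : Set ℝ := {t ∈ Set.Icc t₀ t₁ | h' t ≤ -1} with hS
    have hSne : S.Nonempty := ⟨s, hsmem, hsle⟩
    have hSclosed : IsClosed S := by
      have := hcont.preimage_isClosed_of_isClosed isClosed_Icc (isClosed_Iic (a := (-1:ℝ)))
      have heq : S = Set.Icc t₀ t₁ ∩ h' ⁻¹' Set.Iic (-1) := by
        ext x; simp [hS, Set.mem_setOf_eq]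
      rw [heq]; exact this
    have hScompact : IsCompact S :=
      isCompact_Icc.of_isClosed_subset hSclosed (fun x hx => hx.1)
    obtain ⟨u, huS, humin⟩ := hScompact.exists_isLeast hSne
    have huIcc : u ∈ Set.Icc t₀ t₁ := huS.1
    have hune : t₀ < u := by
      rcases lt_or_eq_of_le huIcc.1 with h1 | h1
      · exact h1
      · exfalso; rw [← h1] at huS; linarith [huS.2]
    -- on Ico t₀ u, -1 < h'
    have hIco : ∀ x ∈ Set.Ico t₀ u, -1 < h' x := by
      intro x hx
      by_contra hxc
      push_neg at hxc
      have : x ∈ S := ⟨⟨hx.1, le_trans hx.2.le huIcc.2⟩, hxc⟩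
      exact absurd (humin this) (not_le.mpr hx.2)
    have hsub : Set.Icc t₀ u ⊆ Set.Icc t₀ t₁ :=
      Set.Icc_subset_Icc le_rfl huIcc.2
    have hmono : MonotoneOn h' (Set.Icc t₀ u) := by
      apply MonotoneOn.mono ?_ (le_refl (Set.Icc t₀ u))
      apply monotoneOn_of_deriv_nonneg (convex_Icc t₀ u) (hcont.mono hsub)
      · intro x hx
        rw [interior_Icc] at hx
        exact ((hd2 x (hsub (Set.Ioo_subset_Icc_self hx))).differentiableAt).differentiableWithinAt
      · intro x hx
        rw [interior_Icc] at hx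
        have hxI : x ∈ Set.Icc t₀ t₁ := hsub (Set.Ioo_subset_Icc_self hx)
        rw [(hd2 x hxI).deriv, hode x hxI]
        have h1 : -1 < h' x := hIco x ⟨hx.1.le, hx.2⟩
        have h2 : h' x < 0 := hneg x hxI
        have h3 : 0 < 1 - h' x ^ 2 := by nlinarith
        have h4 : 0 < h x := hpos x hxI
        positivity
    have := hmono ⟨le_refl _, hune.le⟩ ⟨hune.le, le_refl _⟩ hune.le
    linarith [huS.2]
  -- h'' positive everywhere
  have hpp : ∀ t ∈ Set.Icc t₀ t₁, 0 < h'' t := by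
    intro t htm
    rw [hode t htm]
    have h1 := key t htm
    have h2 := hneg t htm
    have : 0 < 1 - h' t ^ 2 := by nlinarith
    exact div_pos this (mul_pos ha (hpos t htm))
  -- h' monotone on Icc
  have hmono : MonotoneOn h' (Set.Icc t₀ t₁) := by
    apply monotoneOn_of_deriv_nonneg (convex_Icc t₀ t₁) hcont
    · intro x hx
      rw [interior_Icc] at hx
      exact ((hd2 x (Set.Ioo_subset_Icc_self hx)).differentiableAt).differentiableWithinAt
    · intro x hx
      rw [interior_Icc] at hx
      have hxI : x ∈ Set.Icc t₀ t₁ := Set.Ioo_subset_Icc_self hx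
      rw [(hd2 x hxI).deriv]
      exact (hpp x hxI).le
  -- h antitone on Icc
  have hanti : AntitoneOn h (Set.Icc t₀ t₁) := by
    apply antitoneOn_of_deriv_nonpos (convex_Icc t₀ t₁)
      (fun t htm => (hd1 t htm).continuousAt.continuousWithinAt)
    · intro x hx
      rw [interior_Icc] at hx
      exact ((hd1 x (Set.Ioo_subset_Icc_self hx)).differentiableAt).differentiableWithinAt
    · intro x hx
      rw [interior_Icc] at hx
      have hxI : x ∈ Set.Icc t₀ t₁ := Set.Ioo_subset_Icc_self hx
      rw [(hd1 x hxI).deriv]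
      exact (hneg x hxI).le
  -- first part
  have part1 : ∀ t ∈ Set.Icc t₀ t₁, (1 - h' t₀ ^ 2) / (a * h t₀) ≤ h'' t := by
    intro t htm
    rw [hode t htm]
    have hle : h' t₀ ≤ h' t := hmono ht₀ htm htm.1
    have h2 : h' t < 0 := hneg t htm
    have h0 : h' t₀ < 0 := hneg t₀ ht₀
    have hsq : h' t ^ 2 ≤ h' t₀ ^ 2 := by nlinarith
    have hnum : 1 - h' t₀ ^ 2 ≤ 1 - h' t ^ 2 := by linarith
    have hnum0 : 0 ≤ 1 - h' t ^ 2 := by nlinarith [key t htm]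
    have hden : a * h t ≤ a * h t₀ :=
      mul_le_mul_of_nonneg_left (hanti ht₀ htm htm.1) ha.le
    have hden0 : 0 < a * h t := mul_pos ha (hpos t htm)
    exact div_le_div₀ hnum0 hnum hden0 hden
  intro t htm
  refine ⟨part1 t htm, ?_⟩
  -- second part via monotonicity of g x = h' x - C x
  set C := (1 - h' t₀ ^ 2) / (a * h t₀) with hC
  have gmono : MonotoneOn (fun x => h' x - C * x) (Set.Icc t₀ t₁) := by
    apply monotoneOn_of_deriv_nonneg (convex_Icc t₀ t₁)
    · exact hcont.sub ((continuous_const.mul continuous_id).continuousOn)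
    · intro x hx
      rw [interior_Icc] at hx
      have hxI : x ∈ Set.Icc t₀ t₁ := Set.Ioo_subset_Icc_self hx
      exact (((hd2 x hxI).sub ((hasDerivAt_id x).const_mul C)).differentiableAt).differentiableWithinAt
    · intro x hx
      rw [interior_Icc] at hx
      have hxI : x ∈ Set.Icc t₀ t₁ := Set.Ioo_subset_Icc_self hx
      have hg : HasDerivAt (fun x => h' x - C * x) (h'' x - C * 1) x :=
        (hd2 x hxI).sub ((hasDerivAt_id x).const_mul C)
      rw [hg.deriv]
      have := part1 x hxI
      linarith
  have := gmono ht₀ htm htm.1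
  simp only at this
  linarith
end
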